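/- arXiv:1311.0140 — 3 statements merged into one kernel-verified Lean document; each statement's English description precedes it below -/
import Mathlib

section
/- For all a > 0 and all real ω, e^{-a}·|Ω(ω)|² ≤ |Ω(ω, a)|², where Ω(ω) := (1 - e^{-iω})/(iω) for ω ≠ 0 (and Ω(0) := 1) and Ω(ω, a) := (1 - e^{-(a+iω)})/(a+iω). -/
open Complex

noncomputable def OmegaA (ω a : ℝ) : ℂ :=
  (1 - Complex.exp (-(a + ω * Complex.I))) / (a + ω * Complex.I)

noncomputable def Omega (ω : ℝ) : ℂ :=
  if ω = 0 then 1 else (1 - Complex.exp (-(ω * Complex.I))) / (ω * Complex.I)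

/-! Writing `z = a + iω`, one has `‖1 - exp (-z)‖² = 2 e^{-a} (cosh a - cos ω)`, so after clearing
denominators the inequality becomes `(1 - cos ω) a² ≤ ω² (cosh a - 1)`. This follows from
`1 - cos ω ≤ ω²/2` and `a²/2 ≤ cosh a - 1`. -/

theorem Real.one_add_sq_div_two_le_cosh (x : ℝ) : 1 + x ^ 2 / 2 ≤ Real.cosh x := by
  have hsinh : (x / 2) ^ 2 ≤ Real.sinh (x / 2) ^ 2 := by
    rw [sq_le_sq, Real.abs_sinh]
    exact Real.self_le_sinh_iff.mpr (abs_nonneg _)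
  have hcosh : Real.cosh x = 2 * Real.sinh (x / 2) ^ 2 + 1 := by
    have h := Real.cosh_two_mul (x / 2)
    rw [mul_div_cancel₀ x two_ne_zero, Real.cosh_sq] at h
    linarith
  nlinarith

theorem Complex.norm_one_sub_exp_neg_sq (z : ℂ) :
    ‖1 - exp (-z)‖ ^ 2 = 2 * Real.exp (-z.re) * (Real.cosh z.re - Real.cos z.im) := by
  rw [Complex.sq_norm, normSq_apply]
  simp only [sub_re, sub_im, one_re, one_im, exp_re, exp_im, neg_re, neg_im, Real.cos_neg,
    Real.sin_neg, Real.cosh_eq]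
  have hexp : Real.exp z.re * Real.exp (-z.re) = 1 := by rw [← Real.exp_add]; simp
  linear_combination (Real.exp (-z.re) ^ 2) * Real.sin_sq_add_cos_sq z.im - hexp

theorem one_sub_cos_mul_sq_add_sq_le (x y : ℝ) :
    (1 - Real.cos y) * (x ^ 2 + y ^ 2) ≤ y ^ 2 * (Real.cosh x - Real.cos y) := by
  have hcos : 1 - Real.cos y ≤ y ^ 2 / 2 := by linarith [Real.one_sub_sq_div_two_le_cos (x := y)]
  have hcosh : x ^ 2 / 2 ≤ Real.cosh x - 1 := by linarith [Real.one_add_sq_div_two_le_cosh x]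
  nlinarith [sq_nonneg x, sq_nonneg y]

theorem norm_OmegaA_sq (ω a : ℝ) :
    ‖OmegaA ω a‖ ^ 2 = 2 * Real.exp (-a) * (Real.cosh a - Real.cos ω) / (a ^ 2 + ω ^ 2) := by
  rw [OmegaA, norm_div, div_pow, norm_one_sub_exp_neg_sq, Complex.sq_norm, normSq_add_mul_I]
  simp

theorem norm_Omega_sq {ω : ℝ} (hω : ω ≠ 0) :
    ‖Omega ω‖ ^ 2 = 2 * (1 - Real.cos ω) / ω ^ 2 := by
  rw [Omega, if_neg hω, norm_div, div_pow, norm_one_sub_exp_neg_sq]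
  simp

theorem abs_Omega_lower_bound (a ω : ℝ) (ha : 0 < a) :
    Real.exp (-a) * ‖Omega ω‖ ^ 2 ≤ ‖OmegaA ω a‖ ^ 2 := by
  rw [norm_OmegaA_sq]
  rcases eq_or_ne ω 0 with rfl | hω
  · have hcosh := Real.one_add_sq_div_two_le_cosh a
    rw [Omega, if_pos rfl, le_div_iff₀ (by positivity)]
    simp only [norm_one, one_pow, mul_one, Real.cos_zero]
    nlinarith [Real.exp_pos (-a)]
  · rw [norm_Omega_sq hω, mul_div_assoc', div_le_div_iff₀ (by positivity) (by positivity)]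
    have key := one_sub_cos_mul_sq_add_sq_le a ω
    nlinarith [Real.exp_pos (-a)]
end

section
/- Let a > 0 and ω real with the imaginary part of Ω(ω, a) := (1 - e^{-(a+iω)})/(a+iω) equal to zero. Then the real part of Ω(ω, a) equals (e^{-a}/a)(e^{a} - cos ω), and in particular Re Ω(ω, a) ≥ 0. -/
theorem re_Omega_of_im_eq_zero (a ω : ℝ) (ha : 0 < a)
    (him : ((1 - Complex.exp (-(a + ω * Complex.I))) / (a + ω * Complex.I)).im = 0) :
    ((1 - Complex.exp (-(a + ω * Complex.I))) / (a + ω * Complex.I)).re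
        = Real.exp (-a) / a * (Real.exp a - Real.cos ω) ∧
      0 ≤ ((1 - Complex.exp (-(a + ω * Complex.I))) / (a + ω * Complex.I)).re := by
  have hd : (0:ℝ) < a * a + ω * ω := by nlinarith [mul_self_nonneg ω]
  simp only [Complex.div_im, Complex.div_re, Complex.sub_re, Complex.sub_im,
    Complex.one_re, Complex.one_im, Complex.exp_re, Complex.exp_im,
    Complex.neg_re, Complex.neg_im, Complex.add_re, Complex.add_im,
    Complex.mul_re, Complex.mul_im, Complex.I_re, Complex.I_im,
    Complex.ofReal_re, Complex.ofReal_im, Complex.normSq_apply,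
    mul_zero, zero_mul, mul_one, sub_zero, zero_add, add_zero, zero_sub, neg_neg,
    Real.cos_neg, Real.sin_neg, mul_neg, neg_mul] at him ⊢
  set E := Real.exp (-a) with hE
  have hE1 : E * Real.exp a = 1 := by
    rw [hE, ← Real.exp_add]; simp
  have hcos : E * Real.cos ω ≤ 1 := by
    calc E * Real.cos ω ≤ E * 1 := by
          have := Real.exp_pos (-a); nlinarith [Real.cos_le_one ω]
      _ ≤ 1 := by rw [mul_one, hE]; exact Real.exp_le_one_iff.mpr (by linarith)
  -- from him: a * E * sin ω = ω * (1 - E * cos ω)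
  have key : E * Real.sin ω * a = (1 - E * Real.cos ω) * ω := by
    field_simp at him
    linarith
  have hre : (1 - E * Real.cos ω) * a / (a * a + ω * ω)
      + E * Real.sin ω * ω / (a * a + ω * ω) = (1 - E * Real.cos ω) / a := by
    field_simp
    linear_combination ω * key
  constructor
  · rw [hre]
    field_simp
    nlinarith [hE1]
  · rw [hre]
    exact div_nonneg (by linarith) ha.le
end

section
/- Let a > 0 and ω ∈ ℝ. Then the complex number Ω(ω, a) := (1 - e^{-(a+iω)})/(a+iω) is not a nonpositive real number; i.e., Ω(ω, a) ∉ {y ∈ ℝ : y ≤ 0} ⊂ ℂ. In particular Ω(ω,a) ≠ 0 and its principal argument lies in (-π, π). -/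
open Real

namespace Complex

/-- If `(1 - exp (-s)) / s = c` with `c ≤ 0` real, then `exp (-s) = 1 - c s` has real part
`1 - c re s ≥ 1`, contradicting `‖exp (-s)‖ = exp (-re s) < 1`. -/
theorem one_sub_exp_neg_div_mem_slitPlane {s : ℂ} (hs : 0 < s.re) :
    (1 - exp (-s)) / s ∈ slitPlane := by
  rw [mem_slitPlane_iff_not_le_zero]
  intro hle
  obtain ⟨c, hc, hcs⟩ : ∃ c : ℝ, c ≤ 0 ∧ (1 - exp (-s)) / s = c :=
    ⟨_, (le_def.mp hle).1, ext rfl (by simpa using (le_def.mp hle).2)⟩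
  have hs0 : s ≠ 0 := fun h => hs.ne' (by simp [h])
  have hexp : exp (-s) = 1 - c * s := by
    rw [← hcs, div_mul_cancel₀ _ hs0]
    ring
  have hlt : ‖exp (-s)‖ < 1 := by
    rw [norm_exp, neg_re, Real.exp_lt_one_iff, neg_lt_zero]
    exact hs
  have hge : 1 ≤ ‖exp (-s)‖ :=
    calc (1 : ℝ) ≤ 1 - c * s.re := by nlinarith
      _ = (1 - c * s).re := by simp
      _ ≤ ‖1 - c * s‖ := re_le_norm _
      _ = ‖exp (-s)‖ := by rw [hexp]
  exact hlt.not_ge hge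

end Complex

theorem Omega_not_nonpos_real (a ω : ℝ) (ha : 0 < a) :
    ((1 - Complex.exp (-(a + ω * Complex.I))) / (a + ω * Complex.I))
        ∉ {w : ℂ | w.im = 0 ∧ w.re ≤ 0} ∧
      (1 - Complex.exp (-(a + ω * Complex.I))) / (a + ω * Complex.I) ≠ 0 ∧
      Complex.arg ((1 - Complex.exp (-(a + ω * Complex.I))) / (a + ω * Complex.I))
        ∈ Set.Ioo (-π) π := by
  have h := Complex.one_sub_exp_neg_div_mem_slitPlane (s := a + ω * Complex.I) (by simpa using ha)
  refine ⟨?_, Complex.slitPlane_ne_zero h, Complex.neg_pi_lt_arg _,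
    (Complex.arg_le_pi _).lt_of_ne (Complex.slitPlane_arg_ne_pi h)⟩
  rintro ⟨him, hre⟩
  rcases Complex.mem_slitPlane_iff.mp h with hpos | hne
  · exact hre.not_gt hpos
  · exact hne him
end
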